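/- arXiv:1011.2169 — 2 statements merged into one kernel-verified Lean document; each statement's English description precedes it below -/
import Mathlib

section
/- If n is divisible by 4, say n = 2m = 4p, then there exists an invariant w ∈ A_n = ker D_n such that π_{m,n}(w) = x_0^3. -/
open MvPolynomial Finset
open Fin.NatCast

noncomputable def Dw (K : Type) [CommRing K] (n : ℕ) :
    Derivation K (MvPolynomial (Fin (n + 1)) K) (MvPolynomial (Fin (n + 1)) K) :=
  MvPolynomial.mkDerivation K fun i =>
    if i.1 = 0 then 0 else
      MvPolynomial.X ⟨i.1 - 1, Nat.lt_of_le_of_lt (Nat.sub_le _ _) i.isLt⟩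

noncomputable def piHom (K : Type) [CommRing K] (m n : ℕ) :
    MvPolynomial (Fin (n + 1)) K →ₐ[K] MvPolynomial (Fin (m + 1)) K :=
  MvPolynomial.aeval fun i : Fin (n + 1) =>
    if i.1 < n - m then 0 else MvPolynomial.X ((i.1 - (n - m) : ℕ) : Fin (m + 1))

/-!
The invariant is a cubic form `w = ∑ c i j k • x_i x_j x_k`; since `D x_i = x_{i-1}`, `D w = 0`
amounts to `c (i+1) j k + c i (j+1) k + c i j (k+1) = 0`. This holds when `c i j k` is
`± i! j! k!` times the coefficient of `s^k u^i v^j` in the translation-invariant polynomial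
`((s - u) (u - v) (v - s)) ^ m`, which we handle through its dehomogenization
`((1 + u) (1 + v) (v - u)) ^ m` at `s = -1`. Its partial degrees are at most `2 m = n` and it is
homogeneous of degree `3 m`, so `π_{m,n}`, which kills `x_0, …, x_{m-1}` and sends `x_m` to `x_0`,
maps `w` to `c m m m • x_0 ^ 3`. For `m = 2 p` the central coefficient is the Dixon sum
`∑ (-1)^j C(2p, j)^3`, which is nonzero: Dixon sums satisfy a first-order recurrence with positive
ratio in one parameter, proved by a Wilf–Zeilberger certificate.
-/

open scoped Nat

def intChoose (M : ℕ) (z : ℤ) : ℚ := if 0 ≤ z then (M.choose z.toNat : ℚ) else 0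

namespace intChoose

lemma of_neg {M : ℕ} {z : ℤ} (h : z < 0) : intChoose M z = 0 := by
  simp [intChoose, not_le.mpr h]

@[simp]
lemma natCast (M t : ℕ) : intChoose M t = M.choose t := by
  simp [intChoose]

lemma of_lt {M : ℕ} {z : ℤ} (h : (M : ℤ) < z) : intChoose M z = 0 := by
  rw [intChoose, if_pos (by omega), Nat.choose_eq_zero_of_lt (by omega), Nat.cast_zero]

lemma succ_mul (M : ℕ) (z : ℤ) :
    ((z : ℚ) + 1) * intChoose M (z + 1) = ((M : ℚ) - z) * intChoose M z := by
  rcases lt_trichotomy z (-1) with h | rfl | h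
  · rw [of_neg (by omega), of_neg (by omega)]; ring
  · rw [of_neg (by norm_num : (-1 : ℤ) < 0)]; norm_num
  · obtain ⟨t, rfl⟩ := Int.eq_ofNat_of_zero_le (by omega : 0 ≤ z)
    rw [show (t : ℤ) + 1 = ((t + 1 : ℕ) : ℤ) by push_cast; ring, natCast, natCast]
    rcases le_or_gt t M with ht | ht
    · have h := congrArg (Nat.cast : ℕ → ℚ) (Nat.choose_succ_right_eq M t)
      push_cast [ht] at h ⊢
      linarith
    · rw [Nat.choose_eq_zero_of_lt (by omega), Nat.choose_eq_zero_of_lt ht]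
      norm_num

lemma succ_succ (M : ℕ) (z : ℤ) :
    intChoose (M + 1) (z + 1) = intChoose M z + intChoose M (z + 1) := by
  rcases lt_trichotomy z (-1) with h | rfl | h
  · rw [of_neg (by omega), of_neg (by omega), of_neg (by omega)]; ring
  · norm_num [intChoose]
  · obtain ⟨t, rfl⟩ := Int.eq_ofNat_of_zero_le (by omega : 0 ≤ z)
    rw [show (t : ℤ) + 1 = ((t + 1 : ℕ) : ℤ) by push_cast; ring, natCast, natCast, natCast,
      Nat.choose_succ_succ]
    push_cast
    ring

lemma sub_left (M : ℕ) (z : ℤ) : intChoose M (M - z) = intChoose M z := by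
  rcases lt_or_ge z 0 with h | h
  · rw [of_neg h, of_lt (by omega)]
  rcases le_or_gt z M with h' | h'
  · obtain ⟨t, rfl⟩ := Int.eq_ofNat_of_zero_le h
    rw [show (M : ℤ) - t = ((M - t : ℕ) : ℤ) by omega, natCast, natCast,
      Nat.choose_symm (by omega)]
  · rw [of_neg (by omega), of_lt h']

end intChoose

/-- With `k = j - b` this is the summand `(-1) ^ (b + k) * C(n + b, n + k) * C(b + c, b + k) *
C(c + n, c + k)` of Dixon's identity. -/
def dixonTerm (n b c j : ℕ) : ℚ :=
  (-1) ^ j * intChoose (n + b) (n - b + j) * intChoose (b + c) j * intChoose (c + n) (c - b + j)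

def dixonSum (n b c : ℕ) : ℚ := ∑ j ∈ range (b + c + 1), dixonTerm n b c j

def dixonCert (n b c j : ℕ) : ℚ :=
  (-1) ^ j * (j / 2 : ℚ) * intChoose (n + b) (n - b + j) * intChoose (b + c) j *
    intChoose (c + n) (c - b + j - 1)

lemma dixonTerm_wz (n b c j : ℕ) :
    ((n : ℚ) + b + c + 1) * dixonTerm n b c j - ((n : ℚ) + 1) * dixonTerm (n + 1) b c j =
      dixonCert n b c (j + 1) - dixonCert n b c j := by
  set C₁ := intChoose (n + b) (n - b + j)
  set C₁' := intChoose (n + b) (n - b + j + 1)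
  set C₂ := intChoose (b + c) j
  set C₂' := intChoose (b + c) (j + 1)
  set C₃ := intChoose (c + n) (c - b + j)
  set C₃' := intChoose (c + n) (c - b + j - 1)
  have pascal₁ : intChoose (n + 1 + b) ((n + 1 : ℕ) - b + j) = C₁ + C₁' := by
    rw [show ((n + 1 : ℕ) - b + j : ℤ) = (n - b + j) + 1 by push_cast; ring,
      show n + 1 + b = (n + b) + 1 by ring, intChoose.succ_succ]
  have pascal₃ : intChoose (c + (n + 1)) (c - b + j) = C₃' + C₃ := by
    rw [show (c - b + j : ℤ) = (c - b + j - 1) + 1 by ring, ← add_assoc, intChoose.succ_succ,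
      sub_add_cancel]
  have absorb₁ : ((n : ℚ) - b + j + 1) * C₁' = (2 * b - j) * C₁ := by
    have h := intChoose.succ_mul (n + b) (n - b + j)
    push_cast at h
    linear_combination h
  have absorb₂ : ((j : ℚ) + 1) * C₂' = ((b : ℚ) + c - j) * C₂ := by
    have h := intChoose.succ_mul (b + c) j
    push_cast at h
    linear_combination h
  have absorb₃ : ((c : ℚ) - b + j) * C₃ = ((n : ℚ) + b - j + 1) * C₃' := by
    have h := intChoose.succ_mul (c + n) (c - b + j - 1)
    rw [sub_add_cancel] at h
    push_cast at h
    linear_combination h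
  simp only [dixonTerm, dixonCert]
  rw [pascal₁, pascal₃, pow_succ]
  push_cast
  rw [show (n - b + (j + 1) : ℤ) = n - b + j + 1 by ring,
    show (c - b + (j + 1) - 1 : ℤ) = c - b + j by ring]
  linear_combination (-1 : ℚ) ^ j * ((C₂ * (-C₃ - C₃' / 2)) * absorb₁ + (C₁' * C₃ / 2) * absorb₂ +
    (C₂ * (C₁ + C₁' / 2)) * absorb₃)

lemma dixonSum_succ (n b c : ℕ) :
    ((n : ℚ) + 1) * dixonSum (n + 1) b c = ((n : ℚ) + b + c + 1) * dixonSum n b c := by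
  have telescope := Finset.sum_range_sub (dixonCert n b c) (b + c + 1)
  simp only [← dixonTerm_wz, sum_sub_distrib, ← mul_sum] at telescope
  have top : dixonCert n b c (b + c + 1) = 0 := by
    rw [dixonCert, intChoose.of_lt (z := ((b + c + 1 : ℕ) : ℤ)) (by omega)]
    ring
  have bottom : dixonCert n b c 0 = 0 := by simp [dixonCert]
  rw [top, bottom, sub_zero] at telescope
  rw [dixonSum, dixonSum]
  linarith

lemma dixonSum_zero (b c : ℕ) : dixonSum 0 b c = (-1) ^ b * (b + c).choose b := by
  rw [dixonSum, sum_eq_single_of_mem b (mem_range.mpr (by omega))]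
  · simp [dixonTerm, intChoose, show (c : ℤ) - b + b = c by ring]
  · intro j _ hjb
    rcases lt_or_gt_of_ne hjb with h | h
    · rw [dixonTerm, intChoose.of_neg (z := ((0 : ℕ) : ℤ) - b + j) (by omega)]; ring
    · rw [dixonTerm, intChoose.of_lt (z := (c : ℤ) - b + j) (by push_cast; omega)]; ring

lemma neg_one_pow_mul_dixonSum_pos (n b c : ℕ) : 0 < (-1 : ℚ) ^ b * dixonSum n b c := by
  induction n with
  | zero =>
    rw [dixonSum_zero, ← mul_assoc, ← mul_pow]
    norm_num
    exact Nat.choose_pos (by omega)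
  | succ n ih =>
    have hrec : dixonSum (n + 1) b c = ((n + b + c + 1) / (n + 1)) * dixonSum n b c := by
      rw [div_mul_eq_mul_div, eq_div_iff (by positivity)]
      linear_combination dixonSum_succ n b c
    rw [hrec, mul_left_comm]
    positivity

/-- Summand of the coefficient of `u ^ i * v ^ j` in `((1 + u) * (1 + v) * (v - u)) ^ m`, obtained by
expanding `(v - u) ^ m` and taking `u ^ a * v ^ (m - a)` from it. -/
def vandermondeTerm (m i j a : ℕ) : ℚ :=
  (-1) ^ a * intChoose m a * intChoose m (i - a) * intChoose m (a + j - m)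

def vandermondeCoeff (m i j : ℕ) : ℚ := ∑ a ∈ range (m + 2), vandermondeTerm m i j a

def vandermondeCert (m i j a : ℕ) : ℚ :=
  (-1) ^ (a + 1) * a * intChoose m a * intChoose m (i + 1 - a) * intChoose m (a + j - m)

lemma vandermondeTerm_step (m i j a : ℕ) :
    ((i : ℚ) + 1) * vandermondeTerm m (i + 1) j a + ((j : ℚ) + 1) * vandermondeTerm m i (j + 1) a -
      (3 * m - i - j) * vandermondeTerm m i j a =
      vandermondeCert m i j (a + 1) - vandermondeCert m i j a := by
  set A := intChoose m a
  set A' := intChoose m (a + 1)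
  set B := intChoose m (i - a)
  set B' := intChoose m (i - a + 1)
  set C := intChoose m (a + j - m)
  set C' := intChoose m (a + j - m + 1)
  have absorbA : ((a : ℚ) + 1) * A' = (m - a) * A := by
    have h := intChoose.succ_mul m a
    push_cast at h
    linear_combination h
  have absorbB : ((i : ℚ) - a + 1) * B' = (m - (i - a)) * B := by
    have h := intChoose.succ_mul m (i - a)
    push_cast at h
    linear_combination h
  have absorbC : ((a : ℚ) + j - m + 1) * C' = (m - (a + j - m)) * C := by
    have h := intChoose.succ_mul m (a + j - m)
    push_cast at h
    linear_combination h
  simp only [vandermondeTerm, vandermondeCert]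
  push_cast
  rw [show (i + 1 - a : ℤ) = i - a + 1 by ring, show (a + (j + 1) - m : ℤ) = a + j - m + 1 by ring,
    show (a + 1 + j - m : ℤ) = a + j - m + 1 by ring, show (i + 1 - (a + 1) : ℤ) = i - a by ring,
    pow_succ, pow_succ]
  linear_combination (-1 : ℚ) ^ a * ((A * C) * absorbB - (B * C') * absorbA + (A * B) * absorbC)

/-- Coefficientwise form of `(1 + u) ∂ᵤF + (1 + v) ∂ᵥF = 3 m F`
for `F = ((1 + u) * (1 + v) * (v - u)) ^ m`. -/
lemma vandermondeCoeff_step (m i j : ℕ) :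
    ((i : ℚ) + 1) * vandermondeCoeff m (i + 1) j + ((j : ℚ) + 1) * vandermondeCoeff m i (j + 1) =
      (3 * m - i - j) * vandermondeCoeff m i j := by
  have telescope := Finset.sum_range_sub (vandermondeCert m i j) (m + 2)
  simp only [← vandermondeTerm_step, sum_sub_distrib, sum_add_distrib, ← mul_sum] at telescope
  have top : vandermondeCert m i j (m + 2) = 0 := by
    rw [vandermondeCert, intChoose.of_lt (z := ((m + 2 : ℕ) : ℤ)) (by omega)]
    ring
  have bottom : vandermondeCert m i j 0 = 0 := by simp [vandermondeCert]
  rw [top, bottom, sub_zero] at telescope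
  rw [vandermondeCoeff, vandermondeCoeff, vandermondeCoeff]
  linarith

lemma vandermondeCoeff_of_lt_left {m i : ℕ} (j : ℕ) (h : 2 * m < i) :
    vandermondeCoeff m i j = 0 := by
  refine sum_eq_zero fun a _ => ?_
  rcases le_or_gt a m with ha | ha
  · rw [vandermondeTerm, intChoose.of_lt (z := (i : ℤ) - a) (by omega)]; ring
  · rw [vandermondeTerm, intChoose.of_lt (z := (a : ℤ)) (by omega)]; ring

lemma vandermondeCoeff_of_lt_right {m j : ℕ} (i : ℕ) (h : 2 * m < j) :
    vandermondeCoeff m i j = 0 := by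
  refine sum_eq_zero fun a _ => ?_
  rcases le_or_gt a m with ha | ha
  · rw [vandermondeTerm, intChoose.of_lt (z := (a : ℤ) + j - m) (by omega)]; ring
  · rw [vandermondeTerm, intChoose.of_lt (z := (a : ℤ)) (by omega)]; ring

lemma vandermondeCoeff_of_add_lt {m i j : ℕ} (h : i + j < m) : vandermondeCoeff m i j = 0 := by
  refine sum_eq_zero fun a _ => ?_
  rcases lt_or_ge ((a : ℤ) + j) m with ha | ha
  · rw [vandermondeTerm, intChoose.of_neg (z := (a : ℤ) + j - m) (by omega)]; ring
  · rw [vandermondeTerm, intChoose.of_neg (z := (i : ℤ) - a) (by omega)]; ring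

lemma vandermondeCoeff_central (p : ℕ) :
    vandermondeCoeff (2 * p) (2 * p) (2 * p) = dixonSum p p p := by
  rw [vandermondeCoeff, dixonSum, sum_range_succ, show 2 * p + 1 = p + p + 1 by ring]
  have last : vandermondeTerm (2 * p) (2 * p) (2 * p) (p + p + 1) = 0 := by
    rw [vandermondeTerm, intChoose.of_lt (z := ((p + p + 1 : ℕ) : ℤ)) (by omega)]; ring
  rw [last, add_zero]
  refine sum_congr rfl fun a _ => ?_
  have symm := intChoose.sub_left (2 * p) a
  simp only [vandermondeTerm, dixonTerm, ← two_mul]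
  push_cast at symm ⊢
  rw [symm, sub_self, zero_add, add_sub_cancel_right]

/-- The weights `i ! * j ! * k !` turn `vandermondeCoeff_step` into the invariance condition
`cubicCoeff_step`. -/
def cubicCoeff (m i j k : ℕ) : ℚ :=
  if i + j + k = 3 * m then (-1) ^ (i + j) * i ! * j ! * k ! * vandermondeCoeff m i j else 0

lemma cubicCoeff_step (m i j k : ℕ) :
    cubicCoeff m (i + 1) j k + cubicCoeff m i (j + 1) k + cubicCoeff m i j (k + 1) = 0 := by
  by_cases h : i + j + k + 1 = 3 * m
  · rw [cubicCoeff, cubicCoeff, cubicCoeff, if_pos (by omega), if_pos (by omega), if_pos (by omega)]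
    have hk : ((k : ℚ) + 1) = 3 * m - i - j := by
      rw [eq_sub_iff_add_eq, eq_sub_iff_add_eq]
      exact_mod_cast (by omega : k + 1 + j + i = 3 * m)
    rw [Nat.factorial_succ i, Nat.factorial_succ j, Nat.factorial_succ k,
      show i + 1 + j = i + j + 1 by ring, ← add_assoc, pow_succ]
    push_cast
    linear_combination (-1 : ℚ) ^ (i + j) * i ! * j ! * k ! *
      (vandermondeCoeff m i j * hk - vandermondeCoeff_step m i j)
  · rw [cubicCoeff, cubicCoeff, cubicCoeff, if_neg (by omega), if_neg (by omega), if_neg (by omega)]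
    ring

lemma cubicCoeff_of_lt {m i j k : ℕ} (h : 2 * m < i ∨ 2 * m < j ∨ 2 * m < k) :
    cubicCoeff m i j k = 0 := by
  rw [cubicCoeff]
  split_ifs with hsum
  · rcases h with h | h | h
    · rw [vandermondeCoeff_of_lt_left j h, mul_zero]
    · rw [vandermondeCoeff_of_lt_right i h, mul_zero]
    · rw [vandermondeCoeff_of_add_lt (m := m) (i := i) (j := j) (by omega), mul_zero]
  · rfl

lemma cubicCoeff_of_add_ne {m i j k : ℕ} (h : i + j + k ≠ 3 * m) : cubicCoeff m i j k = 0 := by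
  rw [cubicCoeff, if_neg h]

lemma cubicCoeff_central_ne_zero (p : ℕ) : cubicCoeff (2 * p) (2 * p) (2 * p) (2 * p) ≠ 0 := by
  have hdixon : dixonSum p p p ≠ 0 := fun h => by
    simpa [h] using neg_one_pow_mul_dixonSum_pos p p p
  rw [cubicCoeff, if_pos (by ring), vandermondeCoeff_central]
  simp [hdixon, Nat.factorial_ne_zero]

section

variable {R A : Type*} [CommRing R] [CommRing A] [Algebra R A]

def cubicForm (N : ℕ) (x : ℕ → A) (c : ℕ → ℕ → ℕ → R) : A :=
  ∑ i ∈ range (N + 1), ∑ j ∈ range (N + 1), ∑ k ∈ range (N + 1), c i j k • (x i * x j * x k)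

variable {N : ℕ} {x : ℕ → A}

lemma Derivation.leibniz_mul_mul (D : Derivation R A A) (a b c : A) :
    D (a * b * c) = D a * b * c + a * D b * c + a * b * D c := by
  simp only [Derivation.leibniz, smul_eq_mul]
  ring

lemma Derivation.sum_mul_apply_of_shift (D : Derivation R A A) (hx₀ : D (x 0) = 0)
    (hx : ∀ i < N, D (x (i + 1)) = x i) (a : ℕ → A) (ha : a (N + 1) = 0) :
    ∑ i ∈ range (N + 1), a i * D (x i) = ∑ i ∈ range (N + 1), a (i + 1) * x i := by
  rw [sum_range_succ', sum_range_succ _ N, ha, hx₀, zero_mul, mul_zero, add_zero, add_zero]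
  exact sum_congr rfl fun i hi => by rw [hx i (mem_range.mp hi)]

lemma Derivation.apply_cubicForm (D : Derivation R A A) (hx₀ : D (x 0) = 0)
    (hx : ∀ i < N, D (x (i + 1)) = x i) {c : ℕ → ℕ → ℕ → R}
    (hc : ∀ i j k, N < i ∨ N < j ∨ N < k → c i j k = 0) :
    D (cubicForm N x c) =
      cubicForm N x fun i j k => c (i + 1) j k + c i (j + 1) k + c i j (k + 1) := by
  have shift := Derivation.sum_mul_apply_of_shift D hx₀ hx
  simp only [cubicForm, map_sum, D.map_smul, D.leibniz_mul_mul, smul_add, sum_add_distrib,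
    add_smul]
  congr 1
  congr 1
  · calc ∑ i ∈ range (N + 1), ∑ j ∈ range (N + 1), ∑ k ∈ range (N + 1),
          c i j k • (D (x i) * x j * x k)
        = ∑ i ∈ range (N + 1), (∑ j ∈ range (N + 1), ∑ k ∈ range (N + 1),
          c i j k • (x j * x k)) * D (x i) := by
          simp only [sum_mul, smul_mul_assoc]
          exact sum_congr rfl fun i _ => sum_congr rfl fun j _ => sum_congr rfl fun k _ => by
            congr 1; ring
      _ = ∑ i ∈ range (N + 1), (∑ j ∈ range (N + 1), ∑ k ∈ range (N + 1),
          c (i + 1) j k • (x j * x k)) * x i :=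
          shift _ (by simp [hc])
      _ = _ := by
          simp only [sum_mul, smul_mul_assoc]
          exact sum_congr rfl fun i _ => sum_congr rfl fun j _ => sum_congr rfl fun k _ => by
            congr 1; ring
  · refine sum_congr rfl fun i _ => ?_
    calc ∑ j ∈ range (N + 1), ∑ k ∈ range (N + 1), c i j k • (x i * D (x j) * x k)
        = ∑ j ∈ range (N + 1), (∑ k ∈ range (N + 1), c i j k • (x i * x k)) * D (x j) := by
          simp only [sum_mul, smul_mul_assoc]
          exact sum_congr rfl fun j _ => sum_congr rfl fun k _ => by congr 1; ring
      _ = ∑ j ∈ range (N + 1), (∑ k ∈ range (N + 1), c i (j + 1) k • (x i * x k)) * x j :=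
          shift _ (by simp [hc])
      _ = _ := by
          simp only [sum_mul, smul_mul_assoc]
          exact sum_congr rfl fun j _ => sum_congr rfl fun k _ => by congr 1; ring
  · refine sum_congr rfl fun i _ => sum_congr rfl fun j _ => ?_
    simp only [← smul_mul_assoc]
    exact shift _ (by simp [hc])

end

section

variable {R A B : Type*} [CommRing R] [CommRing A] [CommRing B] [Algebra R A] [Algebra R B]

lemma AlgHom.map_cubicForm (f : A →ₐ[R] B) (N : ℕ) (x : ℕ → A) (c : ℕ → ℕ → ℕ → R) :
    f (cubicForm N x c) = cubicForm N (fun i => f (x i)) c := by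
  simp [cubicForm]

lemma cubicForm_eq_smul_pow_three {N m : ℕ} (hm : m ≤ N) {y : ℕ → A} (hy : ∀ i < m, y i = 0)
    {c : ℕ → ℕ → ℕ → R} (hc : ∀ i j k, i + j + k ≠ 3 * m → c i j k = 0) :
    cubicForm N y c = c m m m • y m ^ 3 := by
  have term (i j k : ℕ) (h : ¬(i = m ∧ j = m ∧ k = m)) : c i j k • (y i * y j * y k) = 0 := by
    by_cases hi : i < m
    · simp [hy i hi]
    by_cases hj : j < m
    · simp [hy j hj]
    by_cases hk : k < m
    · simp [hy k hk]
    rw [hc i j k (by omega), zero_smul]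
  have hmem : m ∈ range (N + 1) := mem_range.mpr (by omega)
  rw [cubicForm, sum_eq_single_of_mem m hmem fun i _ hi =>
      sum_eq_zero fun j _ => sum_eq_zero fun k _ => term i j k (by tauto),
    sum_eq_single_of_mem m hmem fun j _ hj => sum_eq_zero fun k _ => term m j k (by tauto),
    sum_eq_single_of_mem m hmem fun k _ hk => term m m k (by tauto), pow_three, mul_assoc]

end

section

variable {K : Type} [CommRing K]

lemma Dw_X_zero (N : ℕ) : Dw K N (X ((0 : ℕ) : Fin (N + 1))) = 0 := by
  simp [Dw, mkDerivation_X]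

lemma Dw_X_succ {N i : ℕ} (hi : i < N) :
    Dw K N (X ((i + 1 : ℕ) : Fin (N + 1))) = X (i : Fin (N + 1)) := by
  have hval : ((i + 1 : ℕ) : Fin (N + 1)).val = i + 1 := Fin.val_cast_of_lt (by omega)
  rw [Dw, mkDerivation_X, if_neg (by omega)]
  congr 1
  ext
  simp only [hval, Nat.add_sub_cancel, Fin.val_cast_of_lt (show i < N + 1 by omega)]

lemma piHom_X_of_lt {m n i : ℕ} (hi : i < n - m) :
    piHom K m n (X (i : Fin (n + 1))) = 0 := by
  rw [piHom, aeval_X, Fin.val_cast_of_lt (by omega), if_pos hi]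

lemma piHom_X_sub (m n : ℕ) :
    piHom K m n (X ((n - m : ℕ) : Fin (n + 1))) = X ((0 : ℕ) : Fin (m + 1)) := by
  rw [piHom, aeval_X, Fin.val_cast_of_lt (by omega), if_neg (lt_irrefl _), Nat.sub_self]

end

theorem stmt9 (K : Type) [Field K] [CharZero K] (p m n : ℕ)
    (h4 : n = 4 * p) (h2 : n = 2 * m) :
    ∃ w : MvPolynomial (Fin (n + 1)) K,
      Dw K n w = 0 ∧ piHom K m n w = X ((0 : ℕ) : Fin (m + 1)) ^ 3 := by
  subst h2
  obtain rfl : m = 2 * p := by omega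
  set c : ℕ → ℕ → ℕ → K := fun i j k =>
    ((cubicCoeff (2 * p) i j k / cubicCoeff (2 * p) (2 * p) (2 * p) (2 * p) : ℚ) : K)
  refine ⟨cubicForm (2 * (2 * p)) (fun i => X (i : Fin (2 * (2 * p) + 1))) c, ?_, ?_⟩
  · rw [Derivation.apply_cubicForm _ (Dw_X_zero _) (fun i hi => Dw_X_succ hi)
      fun i j k h => by simp [c, cubicCoeff_of_lt h]]
    simp [cubicForm, c, ← Rat.cast_add, ← add_div, cubicCoeff_step]
  · have hy (i : ℕ) (hi : i < 2 * p) : piHom K (2 * p) (2 * (2 * p)) (X (i : Fin _)) = 0 :=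
      piHom_X_of_lt (by omega)
    have hcenter := piHom_X_sub (K := K) (2 * p) (2 * (2 * p))
    rw [show 2 * (2 * p) - 2 * p = 2 * p by omega] at hcenter
    rw [AlgHom.map_cubicForm, cubicForm_eq_smul_pow_three (by omega) hy
      fun i j k h => by simp [c, cubicCoeff_of_add_ne h]]
    simp [c, hcenter, cubicCoeff_central_ne_zero]
end

section
/- With n = 2m, m even, and f = (1/2) ∑_{i=0}^{m} (−1)^i x_i x_{m−i}, one has π_{m,n}(Δ_n^m(f)) = (((2p)!)^2 / 2) · x_0^2 · ∑_{i=0}^{2p} (−1)^i C(2p,i) C(4p−i,2p) C(2p+i,i), where m = 2p and Δ_n := ∑_{k=0}^{n−1} (n−k)(k+1) x_{k+1} ∂/∂x_k. -/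
open MvPolynomial Finset
open Fin.NatCast

noncomputable def Δw (K : Type) [CommRing K] (n : ℕ) :
    Derivation K (MvPolynomial (Fin (n + 1)) K) (MvPolynomial (Fin (n + 1)) K) :=
  MvPolynomial.mkDerivation K fun k =>
    (((n - k.1) * (k.1 + 1) : ℕ) : K) •
      if h : k.1 < n then MvPolynomial.X ⟨k.1 + 1, Nat.succ_lt_succ h⟩ else 0

/-!
`Δw` raises indices: `Δ^a x_i = (n-i)↓a · (i+a)↓a · x_{i+a}` (falling factorials), and `piHom`
kills every `x_j` with `j < m`. By the Leibniz rule `Δ^m (x_i x_{m-i})` is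
`∑_{k+l=m} C(m,k) Δ^k x_i Δ^l x_{m-i}`, and only the term `k = m-i, l = i` has both indices
`≥ m`; it lands on `x_0^2` with coefficient `m!^2 C(m,i) C(2m-i,m) C(m+i,i)`.
-/

theorem Derivation.iterate_map_mul {R A : Type*} [CommRing R] [CommRing A] [Algebra R A]
    (D : Derivation R A A) (n : ℕ) (a b : A) :
    (⇑D)^[n] (a * b) = ∑ ij ∈ antidiagonal n, n.choose ij.1 • ((⇑D)^[ij.1] a * (⇑D)^[ij.2] b) := by
  induction n with
  | zero => simp
  | succ n ih =>
    rw [sum_antidiagonal_choose_succ_nsmul (M := A) (fun i j => (⇑D)^[i] a * (⇑D)^[j] b) n]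
    simp only [Function.iterate_succ_apply', ih, map_sum, map_nsmul, Derivation.leibniz,
      smul_eq_mul, smul_add, sum_add_distrib]
    congr 1
    refine sum_congr rfl fun ⟨i, j⟩ hij => ?_
    rw [n.choose_symm_of_eq_add (mem_antidiagonal.1 hij).symm, mul_comm]

theorem Derivation.iterate_eq_pow {R A : Type*} [CommRing R] [CommRing A] [Algebra R A]
    (D : Derivation R A A) (n : ℕ) : (⇑D)^[n] = ⇑((D : Module.End R A) ^ n) :=
  (Module.End.coe_pow _ _).symm

theorem descFactorial_mul_descFactorial_eq_factorial_sq_mul_choose {m i : ℕ} (hi : i ≤ m) :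
    (2 * m - i).descFactorial (m - i) * m.descFactorial (m - i) *
        ((m + i).descFactorial i * m.descFactorial i) =
      m.factorial ^ 2 * (2 * m - i).choose m * (m + i).choose i := by
  have hfac := Nat.choose_mul_factorial_mul_factorial hi
  simp only [Nat.descFactorial_eq_factorial_mul_choose]
  rw [Nat.choose_symm_of_eq_add (show 2 * m - i = m + (m - i) by omega),
    Nat.choose_symm hi, ← hfac]
  ring

section Raising

variable (K : Type) [CommRing K]

theorem Δw_X {n i : ℕ} (h : i < n) :
    Δw K n (X (i : Fin (n + 1))) =
      (((n - i) * (i + 1) : ℕ) : K) • X ((i + 1 : ℕ) : Fin (n + 1)) := by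
  rw [Δw, mkDerivation_X]
  simp only [Fin.val_cast_of_lt (show i < n + 1 by omega)]
  rw [dif_pos h]
  congr 2
  exact Fin.ext (Fin.val_cast_of_lt (by omega)).symm

theorem iterate_Δw_X {n i a : ℕ} (h : i + a ≤ n) :
    (⇑(Δw K n))^[a] (X (i : Fin (n + 1))) =
      (((n - i).descFactorial a * (i + a).descFactorial a : ℕ) : K) •
        X ((i + a : ℕ) : Fin (n + 1)) := by
  induction a with
  | zero => simp
  | succ a ih =>
    rw [Function.iterate_succ_apply', ih (by omega), Derivation.map_smul, Δw_X K (by omega),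
      smul_smul, Nat.descFactorial_succ, ← add_assoc, Nat.succ_descFactorial_succ, ← Nat.cast_mul]
    congr 2
    rw [Nat.sub_sub]
    ring

theorem piHom_X {m j : ℕ} (hj : j ≤ 2 * m) :
    piHom K m (2 * m) (X (j : Fin (2 * m + 1))) =
      if j < m then 0 else X ((j - m : ℕ) : Fin (m + 1)) := by
  rw [piHom, aeval_X, Fin.val_cast_of_lt (by omega), show 2 * m - m = m by omega]

theorem piHom_iterate_Δw_X {m i a : ℕ} (h : i + a ≤ 2 * m) :
    piHom K m (2 * m) ((⇑(Δw K (2 * m)))^[a] (X (i : Fin (2 * m + 1)))) =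
      if i + a < m then 0 else
        (((2 * m - i).descFactorial a * (i + a).descFactorial a : ℕ) : K) •
          X ((i + a - m : ℕ) : Fin (m + 1)) := by
  rw [iterate_Δw_X K h, map_smul, piHom_X K h]
  split_ifs <;> simp

theorem piHom_iterate_Δw_X_mul_X {m i : ℕ} (hi : i ≤ m) :
    piHom K m (2 * m)
        ((⇑(Δw K (2 * m)))^[m] (X (i : Fin (2 * m + 1)) * X ((m - i : ℕ) : Fin (2 * m + 1)))) =
      ((m.factorial ^ 2 * m.choose i * (2 * m - i).choose m * (m + i).choose i : ℕ) : K) •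
        X ((0 : ℕ) : Fin (m + 1)) ^ 2 := by
  rw [Derivation.iterate_map_mul, map_sum, sum_eq_single (m - i, i)]
  · rw [map_nsmul, map_mul, piHom_iterate_Δw_X K (by omega), piHom_iterate_Δw_X K (by omega),
      if_neg (by omega), if_neg (by omega), smul_mul_smul_comm, ← Nat.cast_smul_eq_nsmul K,
      smul_smul, ← Nat.cast_mul, ← Nat.cast_mul, Nat.choose_symm hi,
      show i + (m - i) - m = 0 by omega, show m - i + i - m = 0 by omega, ← sq]
    congr 2
    dsimp only
    rw [Nat.add_sub_cancel' hi, show 2 * m - (m - i) = m + i by omega, add_comm (m - i),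
      Nat.add_sub_cancel' hi, descFactorial_mul_descFactorial_eq_factorial_sq_mul_choose hi]
    ring
  · rintro ⟨k, l⟩ hkl hne
    rw [HasAntidiagonal.mem_antidiagonal] at hkl
    rw [map_nsmul, map_mul, piHom_iterate_Δw_X K (by omega), piHom_iterate_Δw_X K (by omega)]
    rcases Nat.lt_or_ge k (m - i) with hk | hk
    · rw [if_pos (by omega), zero_mul, smul_zero]
    · rw [if_pos (show m - i + l < m by grind), mul_zero, smul_zero]
  · exact fun h => absurd (HasAntidiagonal.mem_antidiagonal.2 (by omega)) h

end Raising

theorem piHom_iterate_Δw_alternating_sum (K : Type) [CommRing K] (m : ℕ) :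
    piHom K m (2 * m)
        ((⇑(Δw K (2 * m)))^[m]
          (∑ i ∈ range (m + 1),
            ((-1 : K) ^ i) • (X (i : Fin (2 * m + 1)) * X ((m - i : ℕ) : Fin (2 * m + 1))))) =
      C ((m.factorial : K) ^ 2 * ∑ i ∈ range (m + 1),
          ((-1 : K) ^ i * (m.choose i : K) * ((2 * m - i).choose m : K) * ((m + i).choose i : K))) *
        X ((0 : ℕ) : Fin (m + 1)) ^ 2 := by
  rw [Derivation.iterate_eq_pow, map_sum, map_sum, mul_sum, map_sum, sum_mul]
  refine sum_congr rfl fun i hi => ?_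
  rw [map_smul, map_smul, ← Derivation.iterate_eq_pow,
    piHom_iterate_Δw_X_mul_X K (mem_range_succ_iff.1 hi), smul_smul, smul_eq_C_mul]
  push_cast
  congr 2
  ring

theorem stmt14_general (K : Type) [Field K] (p m : ℕ) (hm : m = 2 * p) :
    piHom K m (2 * m)
        ((⇑(Δw K (2 * m)))^[m]
          ((1 / 2 : K) • ∑ i ∈ Finset.range (m + 1),
            ((-1 : K) ^ i) •
              (X ((i : ℕ) : Fin (2 * m + 1)) * X ((m - i : ℕ) : Fin (2 * m + 1)))))
      = MvPolynomial.C ((((2 * p).factorial : K) ^ 2 / 2) *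
            ∑ i ∈ Finset.range (2 * p + 1),
              ((-1 : K) ^ i * ((2 * p).choose i : K) * ((4 * p - i).choose (2 * p) : K) *
                ((2 * p + i).choose i : K))) *
          X ((0 : ℕ) : Fin (m + 1)) ^ 2 := by
  subst hm
  rw [Derivation.iterate_eq_pow, map_smul, map_smul, ← Derivation.iterate_eq_pow,
    piHom_iterate_Δw_alternating_sum, smul_eq_C_mul, ← mul_assoc, ← C_mul,
    show 4 * p = 2 * (2 * p) by ring]
  congr 2
  ring

theorem stmt14 (K : Type) [Field K] [CharZero K] (p m : ℕ) (hm : m = 2 * p) :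
    piHom K m (2 * m)
        ((⇑(Δw K (2 * m)))^[m]
          ((1 / 2 : K) • ∑ i ∈ Finset.range (m + 1),
            ((-1 : K) ^ i) •
              (X ((i : ℕ) : Fin (2 * m + 1)) * X ((m - i : ℕ) : Fin (2 * m + 1)))))
      = MvPolynomial.C ((((2 * p).factorial : K) ^ 2 / 2) *
            ∑ i ∈ Finset.range (2 * p + 1),
              ((-1 : K) ^ i * ((2 * p).choose i : K) * ((4 * p - i).choose (2 * p) : K) *
                ((2 * p + i).choose i : K))) *
          X ((0 : ℕ) : Fin (m + 1)) ^ 2 :=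
  stmt14_general K p m hm
end
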